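/- arXiv:2005.03188 — 3 statements merged into one kernel-verified Lean document; each statement's English description precedes it below -/
import Mathlib

section
/- Let T ≥ 1, n ≥ 1, η > 0, L ≥ 0, C ≥ 0. For each t ∈ {1,...,T} let ℓ_t : ℝ^n → ℝ be a convex differentiable function with ‖∇ℓ_t(θ)‖ ≤ L for all θ ∈ ℝ^n. Let θ_1 ∈ ℝ^n and define the online gradient descent iterates θ_{t+1} = θ_t − η ∇ℓ_t(θ_t) for t = 1,...,T. Then for any point θ* ∈ ℝ^n satisfying ‖θ_t − θ*‖ ≤ C for all t ∈ {1,...,T}, the regret is bounded as Σ_{t=1}^T ℓ_t(θ_t) − Σ_{t=1}^T ℓ_t(θ*) ≤ C²/(2η) + η L² T / 2. -/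
open RealInnerProductSpace

lemma convex_grad_ineq {E : Type*} [NormedAddCommGroup E] [InnerProductSpace ℝ E] [CompleteSpace E]
    {f : E → ℝ} {G : E} {x y : E}
    (hconv : ConvexOn ℝ Set.univ f) (hgrad : HasGradientAt f G x) :
    f x - f y ≤ ⟪G, x - y⟫ := by
  set A : ℝ →ᵃ[ℝ] E := AffineMap.lineMap x y with hA
  have hφconv : ConvexOn ℝ Set.univ (f ∘ A) := by
    have := hconv.comp_affineMap A
    simpa [Set.preimage_univ] using this
  have hd : HasDerivAt (f ∘ A) ⟪G, y - x⟫ 0 := by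
    have h1 : HasDerivAt (fun s : ℝ => A s) (y - x) 0 := by
      have h1' : (fun s : ℝ => A s) = fun s : ℝ => x + s • (y - x) := by
        funext s; simp [hA, AffineMap.lineMap_apply_module, sub_smul, smul_sub]; abel
      rw [h1']
      simpa using ((hasDerivAt_id (0:ℝ)).smul_const (y - x)).const_add x
    have h2 := hgrad.hasFDerivAt
    rw [show x = A (0:ℝ) by simp [hA]] at h2
    have h3 := h2.comp_hasDerivAt 0 h1
    simpa using h3
  have := hφconv.le_slope_of_hasDerivAt (S := Set.univ) (Set.mem_univ 0) (Set.mem_univ 1) one_pos hd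
  simp [slope_def_field, Function.comp, hA] at this
  have h4 : ⟪G, x - y⟫ = - ⟪G, y - x⟫ := by rw [← inner_neg_right]; congr 1; abel
  rw [h4]
  linarith

/-- Online gradient descent regret bound (Lemma 1 of the paper).
`g t θ` is the gradient of the convex loss `ℓ t` at `θ`. -/
theorem ogd_regret
    (T n : ℕ) (hT : 1 ≤ T) (hn : 1 ≤ n)
    (η L C : ℝ) (hη : 0 < η) (hL : 0 ≤ L) (hC : 0 ≤ C)
    (ℓ : ℕ → EuclideanSpace ℝ (Fin n) → ℝ)
    (g : ℕ → EuclideanSpace ℝ (Fin n) → EuclideanSpace ℝ (Fin n))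
    (hconv : ∀ t ∈ Finset.range T, ConvexOn ℝ Set.univ (ℓ t))
    (hgrad : ∀ t ∈ Finset.range T, ∀ θ, HasGradientAt (ℓ t) (g t θ) θ)
    (hgbound : ∀ t ∈ Finset.range T, ∀ θ, ‖g t θ‖ ≤ L)
    (θ : ℕ → EuclideanSpace ℝ (Fin n))
    (hrec : ∀ t ∈ Finset.range T, θ (t + 1) = θ t - η • g t (θ t))
    (θstar : EuclideanSpace ℝ (Fin n))
    (hdist : ∀ t ∈ Finset.range T, ‖θ t - θstar‖ ≤ C) :
    ∑ t ∈ Finset.range T, ℓ t (θ t) - ∑ t ∈ Finset.range T, ℓ t θstar ≤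
      C ^ 2 / (2 * η) + η * L ^ 2 * T / 2 := by
  set a : ℕ → ℝ := fun t => ‖θ t - θstar‖ ^ 2 with ha
  -- per-step bound
  have key : ∀ t ∈ Finset.range T,
      ℓ t (θ t) - ℓ t θstar ≤ (a t - a (t + 1)) / (2 * η) + η * L ^ 2 / 2 := by
    intro t ht
    have h1 : ℓ t (θ t) - ℓ t θstar ≤ ⟪g t (θ t), θ t - θstar⟫ :=
      convex_grad_ineq (hconv t ht) (hgrad t ht (θ t))
    have h2 : a (t + 1) = a t - 2 * η * ⟪g t (θ t), θ t - θstar⟫ + η ^ 2 * ‖g t (θ t)‖ ^ 2 := by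
      have : θ (t + 1) - θstar = (θ t - θstar) - η • g t (θ t) := by
        rw [hrec t ht]; abel
      rw [ha]
      simp only [this, norm_sub_sq_real, norm_smul, real_inner_smul_right,
        real_inner_comm (θ t - θstar)]
      rw [Real.norm_eq_abs, mul_pow, sq_abs]
      ring
    have h3 : ‖g t (θ t)‖ ^ 2 ≤ L ^ 2 := by
      have := hgbound t ht (θ t)
      nlinarith [norm_nonneg (g t (θ t))]
    have h4 : ⟪g t (θ t), θ t - θstar⟫ = (a t - a (t + 1)) / (2 * η) + η * ‖g t (θ t)‖ ^ 2 / 2 := by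
      rw [h2]; field_simp; ring
    calc ℓ t (θ t) - ℓ t θstar ≤ ⟪g t (θ t), θ t - θstar⟫ := h1
      _ = (a t - a (t + 1)) / (2 * η) + η * ‖g t (θ t)‖ ^ 2 / 2 := h4
      _ ≤ (a t - a (t + 1)) / (2 * η) + η * L ^ 2 / 2 := by
          gcongr
  have hsum : ∑ t ∈ Finset.range T, (ℓ t (θ t) - ℓ t θstar) ≤
      ∑ t ∈ Finset.range T, ((a t - a (t + 1)) / (2 * η) + η * L ^ 2 / 2) :=
    Finset.sum_le_sum key
  rw [← Finset.sum_sub_distrib]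
  refine hsum.trans ?_
  rw [Finset.sum_add_distrib, ← Finset.sum_div, Finset.sum_range_sub' a, Finset.sum_const,
    Finset.card_range, nsmul_eq_mul]
  have ha0 : a 0 - a T ≤ C ^ 2 := by
    have h0 := hdist 0 (Finset.mem_range.mpr hT)
    have e0 : a 0 = ‖θ 0 - θstar‖ ^ 2 := rfl
    have eT : (0:ℝ) ≤ a T := by rw [ha]; positivity
    nlinarith [norm_nonneg (θ 0 - θstar)]
  have h2 : (a 0 - a T) / (2 * η) ≤ C ^ 2 / (2 * η) := by gcongr
  have h3 : (T:ℝ) * (η * L ^ 2 / 2) = η * L ^ 2 * T / 2 := by ring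
  linarith
end

section
/- Let P ≥ 1 and let L : ℝ × ℝ → ℝ be a loss function that is convex in its first argument for each fixed value of the second argument and convex in its second argument for each fixed value of the first argument. Let p, q ∈ ℝ^P be probability vectors (p_i, q_j ≥ 0, Σ_i p_i = Σ_j q_j = 1), let u_1,...,u_P ∈ ℝ, and let η_c > 0. If Σ_{i=1}^P p_i · L(u_i, u_j) ≤ η_c for every j ∈ {1,...,P}, then L( Σ_{i=1}^P p_i u_i , Σ_{j=1}^P q_j u_j ) ≤ η_c. -/
/-- Lemma 4 of the paper (abstract form): if the confidence condition
`∑ i, p i * L (u i) (u j) ≤ ηc` holds for every `j`, then the loss between the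
`p`-average and the `q`-average of the values `u i` is at most `ηc`,
for a loss `L` that is convex in each argument separately. -/
theorem confidence_condition_bound
    (P : ℕ) (hP : 1 ≤ P)
    (L : ℝ → ℝ → ℝ)
    (hconv1 : ∀ b : ℝ, ConvexOn ℝ Set.univ (fun a => L a b))
    (hconv2 : ∀ a : ℝ, ConvexOn ℝ Set.univ (fun b => L a b))
    (p q u : ℕ → ℝ) (ηc : ℝ) (hηc : 0 < ηc)
    (hp0 : ∀ i ∈ Finset.range P, 0 ≤ p i)
    (hp1 : ∑ i ∈ Finset.range P, p i = 1)
    (hq0 : ∀ j ∈ Finset.range P, 0 ≤ q j)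
    (hq1 : ∑ j ∈ Finset.range P, q j = 1)
    (hcond : ∀ j ∈ Finset.range P, ∑ i ∈ Finset.range P, p i * L (u i) (u j) ≤ ηc) :
    L (∑ i ∈ Finset.range P, p i * u i) (∑ j ∈ Finset.range P, q j * u j) ≤ ηc := by
  set A := ∑ i ∈ Finset.range P, p i * u i with hA
  have h1 : L A (∑ j ∈ Finset.range P, q j * u j)
      ≤ ∑ j ∈ Finset.range P, q j * L A (u j) := by
    have := (hconv2 A).map_sum_le hq0 hq1 (fun j _ => Set.mem_univ (u j))
    simpa using this
  have h2 : ∀ j ∈ Finset.range P, L A (u j) ≤ ηc := by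
    intro j hj
    have := (hconv1 (u j)).map_sum_le hp0 hp1 (fun i _ => Set.mem_univ (u i))
    simp only [smul_eq_mul] at this
    exact le_trans this (hcond j hj)
  calc L A (∑ j ∈ Finset.range P, q j * u j)
      ≤ ∑ j ∈ Finset.range P, q j * L A (u j) := h1
    _ ≤ ∑ j ∈ Finset.range P, q j * ηc := by
        refine Finset.sum_le_sum fun j hj => ?_
        exact mul_le_mul_of_nonneg_left (h2 j hj) (hq0 j hj)
    _ = ηc := by rw [← Finset.sum_mul, hq1, one_mul]
end

section
/- Let P ≥ 1, n ≥ 1, B > 0, η_c > 0, and let L : ℝ × ℝ → ℝ be a nonnegative loss function that is convex in its first argument for each fixed value of the second argument and convex in its second argument for each fixed value of the first argument. Let θ_1,...,θ_P ∈ ℝ^n, let u, u' ∈ ℝ^n with ‖u‖ = ‖u'‖ = 1, and suppose that for all i, j ∈ {1,...,P}: L(⟨θ_i, u'⟩, ⟨θ_j, u'⟩) ≤ B · L(⟨θ_i, u⟩, ⟨θ_j, u⟩). Let p, q ∈ ℝ^P be probability vectors. If Σ_{i=1}^P p_i · L(⟨θ_i, u⟩, ⟨θ_j, u⟩) ≤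 η_c for every j ∈ {1,...,P}, then L( Σ_{i=1}^P p_i ⟨θ_i, u'⟩ , Σ_{j=1}^P q_j ⟨θ_j, u'⟩ ) ≤ η_c · B. -/
/-! Applying Jensen's inequality once in each argument of the separately convex loss `L`
bounds `L` at the two averaged predictions by a double average of `L` over pairs of
single-kernel predictions at `u'`. By (a4) each inner average is at most `B` times the
corresponding average at `u`, which the confidence condition bounds by `ηc`. -/

open Finset

section SeparatelyConvex

variable {ι κ E F : Type*} [AddCommGroup E] [Module ℝ E] [AddCommGroup F] [Module ℝ F]
  {C : Set E} {D : Set F} {L : E → F → ℝ} {s : Finset ι} {t : Finset κ}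
  {p : ι → ℝ} {q : κ → ℝ} {a : ι → E} {b : κ → F}

theorem ConvexOn.map_sum_sum_le_of_separately
    (hL₁ : ∀ y ∈ D, ConvexOn ℝ C (L · y)) (hL₂ : ∀ x ∈ C, ConvexOn ℝ D (L x))
    (hp₀ : ∀ i ∈ s, 0 ≤ p i) (hp₁ : ∑ i ∈ s, p i = 1)
    (hq₀ : ∀ j ∈ t, 0 ≤ q j) (hq₁ : ∑ j ∈ t, q j = 1)
    (ha : ∀ i ∈ s, a i ∈ C) (hb : ∀ j ∈ t, b j ∈ D) :
    L (∑ i ∈ s, p i • a i) (∑ j ∈ t, q j • b j)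
      ≤ ∑ j ∈ t, q j * ∑ i ∈ s, p i * L (a i) (b j) := by
  obtain ⟨j₀, hj₀⟩ := nonempty_of_sum_ne_zero (hq₁.trans_ne one_ne_zero)
  have hmem : ∑ i ∈ s, p i • a i ∈ C := (hL₁ _ (hb j₀ hj₀)).1.sum_mem hp₀ hp₁ ha
  calc L (∑ i ∈ s, p i • a i) (∑ j ∈ t, q j • b j)
      ≤ ∑ j ∈ t, q j • L (∑ i ∈ s, p i • a i) (b j) := (hL₂ _ hmem).map_sum_le hq₀ hq₁ hb
    _ ≤ ∑ j ∈ t, q j * ∑ i ∈ s, p i * L (a i) (b j) := by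
      refine sum_le_sum fun j hj => mul_le_mul_of_nonneg_left ?_ (hq₀ j hj)
      simpa only [smul_eq_mul] using (hL₁ _ (hb j hj)).map_sum_le hp₀ hp₁ ha

end SeparatelyConvex

theorem confidence_condition_transfer_general
    (P n : ℕ)
    (B ηc : ℝ) (hB : 0 < B)
    (L : ℝ → ℝ → ℝ)
    (hconv1 : ∀ b : ℝ, ConvexOn ℝ Set.univ (fun a => L a b))
    (hconv2 : ∀ a : ℝ, ConvexOn ℝ Set.univ (fun b => L a b))
    (θ : ℕ → EuclideanSpace ℝ (Fin n))
    (u u' : EuclideanSpace ℝ (Fin n))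
    (htransfer : ∀ i ∈ Finset.range P, ∀ j ∈ Finset.range P,
      L (inner ℝ (θ i) u' : ℝ) (inner ℝ (θ j) u' : ℝ)
        ≤ B * L (inner ℝ (θ i) u : ℝ) (inner ℝ (θ j) u : ℝ))
    (p q : ℕ → ℝ)
    (hp0 : ∀ i ∈ Finset.range P, 0 ≤ p i)
    (hp1 : ∑ i ∈ Finset.range P, p i = 1)
    (hq0 : ∀ j ∈ Finset.range P, 0 ≤ q j)
    (hq1 : ∑ j ∈ Finset.range P, q j = 1)
    (hcond : ∀ j ∈ Finset.range P,
      ∑ i ∈ Finset.range P, p i * L (inner ℝ (θ i) u : ℝ) (inner ℝ (θ j) u : ℝ) ≤ ηc) :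
    L (∑ i ∈ Finset.range P, p i * (inner ℝ (θ i) u' : ℝ))
      (∑ j ∈ Finset.range P, q j * (inner ℝ (θ j) u' : ℝ)) ≤ ηc * B := by
  set a : ℕ → ℝ := fun i => inner ℝ (θ i) u'
  have hrow : ∀ j ∈ range P, ∑ i ∈ range P, p i * L (a i) (a j) ≤ B * ηc := fun j hj =>
    calc ∑ i ∈ range P, p i * L (a i) (a j)
        ≤ ∑ i ∈ range P, p i * (B * L (inner ℝ (θ i) u) (inner ℝ (θ j) u)) :=
          sum_le_sum fun i hi => mul_le_mul_of_nonneg_left (htransfer i hi j hj) (hp0 i hi)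
      _ = B * ∑ i ∈ range P, p i * L (inner ℝ (θ i) u) (inner ℝ (θ j) u) := by
          simp only [mul_left_comm (p _) B, ← mul_sum]
      _ ≤ B * ηc := mul_le_mul_of_nonneg_left (hcond j hj) hB.le
  calc L (∑ i ∈ range P, p i * a i) (∑ j ∈ range P, q j * a j)
      ≤ ∑ j ∈ range P, q j * ∑ i ∈ range P, p i * L (a i) (a j) := by
        simpa only [smul_eq_mul] using ConvexOn.map_sum_sum_le_of_separately
          (fun y _ => hconv1 y) (fun x _ => hconv2 x) hp0 hp1 hq0 hq1
          (fun _ _ => Set.mem_univ _) (fun _ _ => Set.mem_univ _)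
    _ ≤ ∑ j ∈ range P, q j * (B * ηc) :=
        sum_le_sum fun j hj => mul_le_mul_of_nonneg_left (hrow j hj) (hq0 j hj)
    _ = ηc * B := by rw [← sum_mul, hq1, one_mul, mul_comm]

/-- Lemma 5 of the paper (abstract form): transferring the confidence condition
from the feature vector `u` to the feature vector `u'` using assumption (a4)
with constant `B`. -/
theorem confidence_condition_transfer
    (P n : ℕ) (hP : 1 ≤ P) (hn : 1 ≤ n)
    (B ηc : ℝ) (hB : 0 < B) (hηc : 0 < ηc)
    (L : ℝ → ℝ → ℝ)
    (hLnonneg : ∀ a b : ℝ, 0 ≤ L a b)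
    (hconv1 : ∀ b : ℝ, ConvexOn ℝ Set.univ (fun a => L a b))
    (hconv2 : ∀ a : ℝ, ConvexOn ℝ Set.univ (fun b => L a b))
    (θ : ℕ → EuclideanSpace ℝ (Fin n))
    (u u' : EuclideanSpace ℝ (Fin n)) (hu : ‖u‖ = 1) (hu' : ‖u'‖ = 1)
    (htransfer : ∀ i ∈ Finset.range P, ∀ j ∈ Finset.range P,
      L (inner ℝ (θ i) u' : ℝ) (inner ℝ (θ j) u' : ℝ)
        ≤ B * L (inner ℝ (θ i) u : ℝ) (inner ℝ (θ j) u : ℝ))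
    (p q : ℕ → ℝ)
    (hp0 : ∀ i ∈ Finset.range P, 0 ≤ p i)
    (hp1 : ∑ i ∈ Finset.range P, p i = 1)
    (hq0 : ∀ j ∈ Finset.range P, 0 ≤ q j)
    (hq1 : ∑ j ∈ Finset.range P, q j = 1)
    (hcond : ∀ j ∈ Finset.range P,
      ∑ i ∈ Finset.range P, p i * L (inner ℝ (θ i) u : ℝ) (inner ℝ (θ j) u : ℝ) ≤ ηc) :
    L (∑ i ∈ Finset.range P, p i * (inner ℝ (θ i) u' : ℝ))
      (∑ j ∈ Finset.range P, q j * (inner ℝ (θ j) u' : ℝ)) ≤ ηc * B :=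
  confidence_condition_transfer_general P n B ηc hB L hconv1 hconv2 θ u u' htransfer p q hp0 hp1 hq0
    hq1 hcond
end
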